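/- arXiv:1505.05380 — 3 statements merged into one kernel-verified Lean document; each statement's English description precedes it below -/
import Mathlib

section
/- (Three-distance theorem) For any irrational α and any positive integer n, the points {0}, {α}, {2α}, …, {(n-1)α} partition the circle ℝ/ℤ into arcs whose lengths take at most three distinct values. -/
/-- The points `{k·α}` for `0 ≤ k < n` on the circle `ℝ/ℤ`,
represented by their fractional parts in `[0,1)`. -/
def scalePoints (α : ℝ) (n : ℕ) : Set ℝ :=
  {x | ∃ k < n, x = Int.fract (k * α)}

/-- The gap (arc length, in the positive direction) from a point `x`
to the next point of `S` on the circle of circumference 1. -/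
noncomputable def gapOf (S : Set ℝ) (x : ℝ) : ℝ :=
  sInf ((fun y => Int.fract (y - x)) '' (S \ {x}))

/-- The set of gap lengths between circularly consecutive points
among `{k·α}`, `0 ≤ k < n`. -/
noncomputable def gapSet (α : ℝ) (n : ℕ) : Set ℝ :=
  (fun x => gapOf (scalePoints α n) x) '' scalePoints α n

/-!
Write `β m = {m α}` for `m : ℤ` and `N = n - 1`. Since `{β j - β k} = β (j - k)`, the gap after the
point `β k` is the least value of `β` on the offsets `m ∈ [-k, N - k] \ {0}`. Let `β p` be the least
and `β q` the greatest value of `β` on `[1, N]`. A positive offset `m` has `β m ≥ β p`, and even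
`β m ≥ β p + (1 - β q)` when `m < p`, because then `β m - β p = 1 - β (p - m)`; symmetrically a
negative offset `-m` has `β (-m) ≥ 1 - β q`, and `β (-m) ≥ β p + (1 - β q)` when `m < q`. So every
gap is `β p` (attained at `p`), `1 - β q` (at `-q`), or, when neither `p` nor `-q` is an offset,
`β p + (1 - β q)`, attained at `p - q`.
-/

namespace Int

variable {R : Type*} [CommRing R] [LinearOrder R] [IsStrictOrderedRing R] [FloorRing R]

theorem fract_sub_of_fract_le {a b : R} (h : fract b ≤ fract a) :
    fract (a - b) = fract a - fract b := by
  refine fract_eq_iff.2 ⟨sub_nonneg.2 h, by linarith [fract_lt_one a, fract_nonneg b],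
    ⌊a⌋ - ⌊b⌋, ?_⟩
  rw [fract, fract]
  push_cast
  ring

theorem fract_sub_of_fract_lt {a b : R} (h : fract a < fract b) :
    fract (a - b) = fract a - fract b + 1 := by
  refine fract_eq_iff.2 ⟨by linarith [fract_nonneg a, fract_lt_one b], by linarith,
    ⌊a⌋ - ⌊b⌋ - 1, ?_⟩
  rw [fract, fract]
  push_cast
  ring

theorem fract_fract_sub_fract (a b : R) : fract (fract a - fract b) = fract (a - b) :=
  fract_eq_fract.2 ⟨⌊b⌋ - ⌊a⌋, by rw [fract, fract]; push_cast; ring⟩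

end Int

open Int (fract)

namespace Irrational

variable {α : ℝ}

theorem fract_intCast_mul_injective (hα : Irrational α) :
    Function.Injective fun m : ℤ => fract (m * α) := by
  intro a b hab
  obtain ⟨z, hz⟩ := Int.fract_eq_fract.1 hab
  by_contra hne
  refine (hα.intCast_mul (sub_ne_zero.2 hne)).ne_int z ?_
  push_cast
  linarith

theorem fract_intCast_mul_ne_zero (hα : Irrational α) {m : ℤ} (hm : m ≠ 0) :
    fract (m * α) ≠ 0 := by
  simpa using hα.fract_intCast_mul_injective.ne hm

theorem fract_neg_intCast_mul (hα : Irrational α) {m : ℤ} (hm : m ≠ 0) :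
    fract ((-m : ℤ) * α) = 1 - fract (m * α) := by
  rw [Int.cast_neg, neg_mul, Int.fract_neg (hα.fract_intCast_mul_ne_zero hm)]

end Irrational

theorem Int.forall_mem_Icc_neg_sdiff_zero {P : ℤ → Prop} {a b : ℤ}
    (hpos : ∀ m, 1 ≤ m → m ≤ b → P m) (hneg : ∀ j, 1 ≤ j → j ≤ a → P (-j)) :
    ∀ m ∈ Set.Icc (-a) b \ {0}, P m := by
  rintro m ⟨⟨ham, hmb⟩, hm0⟩
  rcases lt_or_gt_of_ne hm0 with hm | hm
  · simpa using hneg (-m) (by omega) (by omega)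
  · exact hpos m hm hmb

section ThreeGap

variable {α : ℝ} {N p q : ℤ}

theorem fract_add_one_sub_fract_le_fract_of_lt (hα : Irrational α) (hpN : p ≤ N)
    (hp : IsMinOn (fun m : ℤ => fract (m * α)) (Set.Icc 1 N) p)
    (hq : IsMaxOn (fun m : ℤ => fract (m * α)) (Set.Icc 1 N) q) {m : ℤ} (hm : 1 ≤ m)
    (hmp : m < p) : fract (p * α) + (1 - fract (q * α)) ≤ fract (m * α) := by
  have hlt : fract (p * α) < fract (m * α) :=
    (hp ⟨hm, by omega⟩).lt_of_ne (hα.fract_intCast_mul_injective.ne hmp.ne')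
  have hpm : fract (((p - m : ℤ) : ℝ) * α) = fract (p * α) - fract (m * α) + 1 := by
    rw [Int.cast_sub, sub_mul, Int.fract_sub_of_fract_lt hlt]
  have : fract (((p - m : ℤ) : ℝ) * α) ≤ fract (q * α) := hq ⟨by omega, by omega⟩
  rw [hpm] at this
  linarith

theorem fract_add_one_sub_fract_le_fract_neg_of_lt (hα : Irrational α) (hqN : q ≤ N)
    (hp : IsMinOn (fun m : ℤ => fract (m * α)) (Set.Icc 1 N) p)
    (hq : IsMaxOn (fun m : ℤ => fract (m * α)) (Set.Icc 1 N) q) {m : ℤ} (hm : 1 ≤ m)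
    (hmq : m < q) : fract (p * α) + (1 - fract (q * α)) ≤ fract ((-m : ℤ) * α) := by
  have hlt : fract (m * α) < fract (q * α) :=
    (hq ⟨hm, by omega⟩).lt_of_ne (hα.fract_intCast_mul_injective.ne hmq.ne)
  have hqm : fract (((q - m : ℤ) : ℝ) * α) = fract (q * α) - fract (m * α) := by
    rw [Int.cast_sub, sub_mul, Int.fract_sub_of_fract_le hlt.le]
  have : fract (p * α) ≤ fract (((q - m : ℤ) : ℝ) * α) := hp ⟨by omega, by omega⟩
  rw [hqm] at this
  rw [hα.fract_neg_intCast_mul (by omega)]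
  linarith

theorem one_sub_fract_le_fract_neg (hα : Irrational α)
    (hq : IsMaxOn (fun m : ℤ => fract (m * α)) (Set.Icc 1 N) q) {m : ℤ} (hm : m ∈ Set.Icc 1 N) :
    1 - fract (q * α) ≤ fract ((-m : ℤ) * α) := by
  have : fract (m * α) ≤ fract (q * α) := hq hm
  rw [hα.fract_neg_intCast_mul (by linarith [hm.1])]
  linarith

theorem isLeast_fract_mul_Icc_of_le_sub (hα : Irrational α) (hpN : p ∈ Set.Icc 1 N)
    (hqN : q ∈ Set.Icc 1 N) (hp : IsMinOn (fun m : ℤ => fract (m * α)) (Set.Icc 1 N) p)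
    (hq : IsMaxOn (fun m : ℤ => fract (m * α)) (Set.Icc 1 N) q) {a : ℤ} (ha : a ∈ Set.Icc 0 N)
    (hpa : p ≤ N - a) (hdp : q ≤ a → fract (p * α) ≤ 1 - fract (q * α)) :
    IsLeast ((fun m : ℤ => fract (m * α)) '' (Set.Icc (-a) (N - a) \ {0})) (fract (p * α)) := by
  obtain ⟨hp1, -⟩ := hpN
  obtain ⟨-, hqN⟩ := hqN
  obtain ⟨ha0, haN⟩ := ha
  refine ⟨⟨p, ⟨⟨by omega, hpa⟩, Set.notMem_singleton_iff.2 (by omega)⟩, rfl⟩, ?_⟩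
  rw [mem_lowerBounds, Set.forall_mem_image]
  refine Int.forall_mem_Icc_neg_sdiff_zero (fun m hm hma => hp ⟨hm, by omega⟩) fun j hj hja => ?_
  rcases lt_or_ge j q with hjq | hqj
  · linarith [fract_add_one_sub_fract_le_fract_neg_of_lt hα hqN hp hq hj hjq,
      Int.fract_lt_one (q * α)]
  · linarith [hdp (by omega), one_sub_fract_le_fract_neg hα hq ⟨hj, by omega⟩]

theorem isLeast_fract_mul_Icc_of_le (hα : Irrational α) (hpN : p ∈ Set.Icc 1 N)
    (hqN : q ∈ Set.Icc 1 N) (hp : IsMinOn (fun m : ℤ => fract (m * α)) (Set.Icc 1 N) p)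
    (hq : IsMaxOn (fun m : ℤ => fract (m * α)) (Set.Icc 1 N) q) {a : ℤ} (ha : a ∈ Set.Icc 0 N)
    (hqa : q ≤ a) (hdm : p ≤ N - a → 1 - fract (q * α) ≤ fract (p * α)) :
    IsLeast ((fun m : ℤ => fract (m * α)) '' (Set.Icc (-a) (N - a) \ {0}))
      (1 - fract (q * α)) := by
  obtain ⟨-, hpN⟩ := hpN
  obtain ⟨hq1, -⟩ := hqN
  obtain ⟨ha0, haN⟩ := ha
  refine ⟨⟨-q, ⟨⟨by omega, by omega⟩, Set.notMem_singleton_iff.2 (by omega)⟩,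
    hα.fract_neg_intCast_mul (by omega)⟩, ?_⟩
  rw [mem_lowerBounds, Set.forall_mem_image]
  refine Int.forall_mem_Icc_neg_sdiff_zero (fun m hm hma => ?_)
    fun j hj hja => one_sub_fract_le_fract_neg hα hq ⟨hj, by omega⟩
  rcases lt_or_ge m p with hmp | hpm
  · linarith [fract_add_one_sub_fract_le_fract_of_lt hα hpN hp hq hm hmp, Int.fract_nonneg (p * α)]
  · linarith [hdm (by omega), show fract (p * α) ≤ fract (m * α) from hp ⟨hm, by omega⟩]

theorem isLeast_fract_mul_Icc_of_sub_lt_of_lt (hα : Irrational α) (hpN : p ∈ Set.Icc 1 N)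
    (hqN : q ∈ Set.Icc 1 N) (hp : IsMinOn (fun m : ℤ => fract (m * α)) (Set.Icc 1 N) p)
    (hq : IsMaxOn (fun m : ℤ => fract (m * α)) (Set.Icc 1 N) q) {a : ℤ} (ha : a ∈ Set.Icc 0 N)
    (hap : N - a < p) (haq : a < q) :
    IsLeast ((fun m : ℤ => fract (m * α)) '' (Set.Icc (-a) (N - a) \ {0}))
      (fract (p * α) + (1 - fract (q * α))) := by
  obtain ⟨hp1, hpN⟩ := hpN
  obtain ⟨hq1, hqN⟩ := hqN
  obtain ⟨ha0, haN⟩ := ha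
  have hpq : p ≠ q := by
    rintro rfl
    have : fract ((1 : ℤ) * α) = fract (p * α) :=
      le_antisymm (hq ⟨le_rfl, by omega⟩) (hp ⟨le_rfl, by omega⟩)
    have := hα.fract_intCast_mul_injective this
    omega
  have hlt : fract (p * α) < fract (q * α) :=
    (hq ⟨hp1, hpN⟩).lt_of_ne (hα.fract_intCast_mul_injective.ne hpq)
  refine ⟨⟨p - q, ⟨⟨by omega, by omega⟩, Set.notMem_singleton_iff.2 (by omega)⟩, ?_⟩, ?_⟩
  · show fract (((p - q : ℤ) : ℝ) * α) = _
    rw [Int.cast_sub, sub_mul, Int.fract_sub_of_fract_lt hlt]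
    ring
  rw [mem_lowerBounds, Set.forall_mem_image]
  exact Int.forall_mem_Icc_neg_sdiff_zero
    (fun m hm hma => fract_add_one_sub_fract_le_fract_of_lt hα hpN hp hq hm (by omega))
    fun j hj hja => fract_add_one_sub_fract_le_fract_neg_of_lt hα hqN hp hq hj (by omega)

theorem exists_isLeast_fract_mul_Icc (hα : Irrational α) (hpN : p ∈ Set.Icc 1 N)
    (hqN : q ∈ Set.Icc 1 N) (hp : IsMinOn (fun m : ℤ => fract (m * α)) (Set.Icc 1 N) p)
    (hq : IsMaxOn (fun m : ℤ => fract (m * α)) (Set.Icc 1 N) q) {a : ℤ} (ha : a ∈ Set.Icc 0 N) :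
    ∃ g ∈ ({fract (p * α), 1 - fract (q * α), fract (p * α) + (1 - fract (q * α))} : Set ℝ),
      IsLeast ((fun m : ℤ => fract (m * α)) '' (Set.Icc (-a) (N - a) \ {0})) g := by
  by_cases hpa : p ≤ N - a
  · by_cases hdp : q ≤ a → fract (p * α) ≤ 1 - fract (q * α)
    · exact ⟨_, by simp, isLeast_fract_mul_Icc_of_le_sub hα hpN hqN hp hq ha hpa hdp⟩
    · push Not at hdp
      exact ⟨_, by simp, isLeast_fract_mul_Icc_of_le hα hpN hqN hp hq ha hdp.1 fun _ => hdp.2.le⟩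
  · by_cases hqa : q ≤ a
    · exact ⟨_, by simp, isLeast_fract_mul_Icc_of_le hα hpN hqN hp hq ha hqa (absurd · hpa)⟩
    · exact ⟨_, by simp,
        isLeast_fract_mul_Icc_of_sub_lt_of_lt hα hpN hqN hp hq ha (by omega) (by omega)⟩

end ThreeGap

theorem image_fract_sub_fract_intCast_mul {α : ℝ} (hα : Irrational α) (s : Set ℤ) (k : ℤ) :
    (fun y => fract (y - fract (k * α))) '' ((fun m : ℤ => fract (m * α)) '' s \ {fract (k * α)})
      = (fun m : ℤ => fract (m * α)) '' ((· - k) '' s \ {0}) := by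
  have hinj := hα.fract_intCast_mul_injective
  calc _ = (fun y => fract (y - fract (k * α))) '' ((fun m : ℤ => fract (m * α)) '' (s \ {k})) := by
        rw [Set.image_sdiff hinj, Set.image_singleton]
    _ = (fun m : ℤ => fract (m * α)) '' ((· - k) '' (s \ {k})) := by
        simp only [Set.image_image, Int.fract_fract_sub_fract, Int.cast_sub, sub_mul]
    _ = _ := by rw [Set.image_sdiff (sub_left_injective), Set.image_singleton, sub_self]

theorem scalePoints_eq_image (α : ℝ) (n : ℕ) :
    scalePoints α n = (fun m : ℤ => fract (m * α)) '' Set.Icc 0 (n - 1) := by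
  ext x
  constructor
  · rintro ⟨k, hk, rfl⟩
    exact ⟨k, ⟨by omega, by omega⟩, by simp⟩
  · rintro ⟨m, ⟨hm0, hmn⟩, rfl⟩
    lift m to ℕ using hm0
    exact ⟨m, by omega, by simp⟩

theorem Set.ncard_triple_le {ι : Type*} (a b c : ι) : ({a, b, c} : Set ι).ncard ≤ 3 := by
  calc ({a, b, c} : Set ι).ncard ≤ ({b, c} : Set ι).ncard + 1 := Set.ncard_insert_le _ _
    _ ≤ ({c} : Set ι).ncard + 1 + 1 := by gcongr; exact Set.ncard_insert_le _ _
    _ = 3 := by rw [Set.ncard_singleton]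

theorem three_distance_general (α : ℝ) (hα : Irrational α) (n : ℕ) :
    (gapSet α n).ncard ≤ 3 := by
  obtain hn | hn := le_or_gt n 1
  · have : gapSet α n ⊆ {gapOf (scalePoints α n) 0} := by
      rintro _ ⟨x, ⟨k, hk, rfl⟩, rfl⟩
      obtain rfl : k = 0 := by omega
      simp
    exact (Set.ncard_le_ncard this (Set.finite_singleton _)).trans (by simp)
  obtain ⟨p, hpN, hp⟩ := Set.exists_min_image (Set.Icc 1 ((n : ℤ) - 1))
    (fun m : ℤ => fract (m * α)) (Set.finite_Icc _ _) ⟨1, le_rfl, by omega⟩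
  obtain ⟨q, hqN, hq⟩ := Set.exists_max_image (Set.Icc 1 ((n : ℤ) - 1))
    (fun m : ℤ => fract (m * α)) (Set.finite_Icc _ _) ⟨1, le_rfl, by omega⟩
  have hgaps : gapSet α n ⊆
      {fract (p * α), 1 - fract (q * α), fract (p * α) + (1 - fract (q * α))} := by
    rintro _ ⟨x, hx, rfl⟩
    rw [scalePoints_eq_image] at hx
    obtain ⟨k, hk, rfl⟩ := hx
    obtain ⟨g, hg, hleast⟩ := exists_isLeast_fract_mul_Icc hα hpN hqN hp hq hk
    simp only [gapOf]
    rwa [scalePoints_eq_image, image_fract_sub_fract_intCast_mul hα, Set.image_sub_const_Icc,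
      zero_sub, hleast.csInf_eq]
  exact (Set.ncard_le_ncard hgaps (Set.toFinite _)).trans (Set.ncard_triple_le _ _ _)

/-- **Three-distance theorem**: for irrational `α` and `n ≥ 1`, the points
`{kα}`, `0 ≤ k < n`, cut the circle into arcs of at most three distinct lengths. -/
theorem three_distance (α : ℝ) (hα : Irrational α) (n : ℕ) (hn : 0 < n) :
    (gapSet α n).ncard ≤ 3 :=
  three_distance_general α hα n
end

section
/- For α = log₂(3/2), the 7 points {kα}, 0 ≤ k ≤ 6, on the circle ℝ/ℤ have gaps taking exactly two distinct values: the Pythagorean whole tone 2α − 1 and the diatonic semitone 3 − 5α. -/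
private lemma fr (x : ℝ) (n : ℤ) (h0 : (n:ℝ) ≤ x) (h1 : x < (n:ℝ)+1) :
    Int.fract x = x - n := by
  rw [← Int.fract_sub_intCast x n]
  exact Int.fract_eq_self.2 ⟨by linarith, by linarith⟩

private lemma sInf_eq' {s : Set ℝ} {a : ℝ} (ha : a ∈ s) (h : ∀ b ∈ s, a ≤ b) :
    sInf s = a :=
  le_antisymm (csInf_le ⟨a, h⟩ ha) (le_csInf ⟨a, ha⟩ h)

private lemma gapOf_eq {T : Set ℝ} {x v : ℝ}
    (hex : ∃ y, (y ∈ T ∧ y ≠ x) ∧ Int.fract (y - x) = v)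
    (hmin : ∀ y ∈ T, y ≠ x → v ≤ Int.fract (y - x)) :
    gapOf T x = v := by
  obtain ⟨y, ⟨h1, h2⟩, h3⟩ := hex
  unfold gapOf
  apply sInf_eq'
  · exact ⟨y, ⟨h1, h2⟩, h3⟩
  · rintro b ⟨z, ⟨hz1, hz2⟩, rfl⟩
    exact hmin z hz1 hz2

set_option maxHeartbeats 2000000 in
/-- The 7 points `{k·log₂(3/2)}`, `0 ≤ k ≤ 6`, have exactly two gap lengths:
the Pythagorean whole tone `2α − 1` and the diatonic semitone `3 − 5α`. -/
theorem diatonic_scale_two_gaps :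
    gapSet (Real.logb 2 (3 / 2)) 7 =
      {2 * Real.logb 2 (3 / 2) - 1, 3 - 5 * Real.logb 2 (3 / 2)} ∧
    2 * Real.logb 2 (3 / 2) - 1 ≠ 3 - 5 * Real.logb 2 (3 / 2) := by
  set α := Real.logb 2 (3 / 2) with hα
  -- numeric bounds on α
  have hlog2 : (0:ℝ) < Real.log 2 := Real.log_pos (by norm_num)
  have h5 : 5 * Real.log (3/2) < 3 * Real.log 2 := by
    have h := Real.log_lt_log (by norm_num : (0:ℝ) < (3/2)^(5:ℕ))
      (by norm_num : ((3/2):ℝ)^(5:ℕ) < 2^(3:ℕ))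
    rw [Real.log_pow, Real.log_pow] at h
    push_cast at h; linarith
  have h12 : 7 * Real.log 2 < 12 * Real.log (3/2) := by
    have h := Real.log_lt_log (by norm_num : (0:ℝ) < 2^(7:ℕ))
      (by norm_num : (2:ℝ)^(7:ℕ) < (3/2)^(12:ℕ))
    rw [Real.log_pow, Real.log_pow] at h
    push_cast at h; linarith
  have hl : 7/12 < α := by
    rw [hα]
    show 7/12 < Real.log (3/2) / Real.log 2
    rw [lt_div_iff₀ hlog2]; linarith
  have hu : α < 3/5 := by
    rw [hα]
    show Real.log (3/2) / Real.log 2 < 3/5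
    rw [div_lt_iff₀ hlog2]; linarith
  clear hlog2 h5 h12
  set T : Set ℝ := ({0, α, 2*α-1, 3*α-1, 4*α-2, 5*α-2, 6*α-3} : Set ℝ) with hT
  have hS : scalePoints α 7 = T := by
    rw [hT]
    ext x
    simp only [scalePoints, Set.mem_setOf_eq, Set.mem_insert_iff, Set.mem_singleton_iff]
    constructor
    · rintro ⟨k, hk, rfl⟩
      interval_cases k
      · left; norm_num
      · right; left
        rw [fr _ 0 (by push_cast; linarith) (by push_cast; linarith)]; push_cast; ring
      · right; right; left
        rw [fr _ 1 (by push_cast; linarith) (by push_cast; linarith)]; push_cast; ring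
      · right; right; right; left
        rw [fr _ 1 (by push_cast; linarith) (by push_cast; linarith)]; push_cast; ring
      · right; right; right; right; left
        rw [fr _ 2 (by push_cast; linarith) (by push_cast; linarith)]; push_cast; ring
      · right; right; right; right; right; left
        rw [fr _ 2 (by push_cast; linarith) (by push_cast; linarith)]; push_cast; ring
      · right; right; right; right; right; right
        rw [fr _ 3 (by push_cast; linarith) (by push_cast; linarith)]; push_cast; ring
    · rintro (rfl|rfl|rfl|rfl|rfl|rfl|rfl)
      · exact ⟨0, by norm_num, by norm_num⟩
      · refine ⟨1, by norm_num, ?_⟩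
        rw [fr _ 0 (by push_cast; linarith) (by push_cast; linarith)]; push_cast; ring
      · refine ⟨2, by norm_num, ?_⟩
        rw [fr _ 1 (by push_cast; linarith) (by push_cast; linarith)]; push_cast; ring
      · refine ⟨3, by norm_num, ?_⟩
        rw [fr _ 1 (by push_cast; linarith) (by push_cast; linarith)]; push_cast; ring
      · refine ⟨4, by norm_num, ?_⟩
        rw [fr _ 2 (by push_cast; linarith) (by push_cast; linarith)]; push_cast; ring
      · refine ⟨5, by norm_num, ?_⟩
        rw [fr _ 2 (by push_cast; linarith) (by push_cast; linarith)]; push_cast; ring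
      · refine ⟨6, by norm_num, ?_⟩
        rw [fr _ 3 (by push_cast; linarith) (by push_cast; linarith)]; push_cast; ring
  have G0 : gapOf T 0 = 2*α-1 := by
    apply gapOf_eq
    · refine ⟨2*α-1, ⟨by rw [hT]; simp, by intro h; linarith⟩, ?_⟩
      rw [fr _ 0 (by push_cast; linarith) (by push_cast; linarith)]; push_cast; ring
    · intro y hy hne
      rw [hT] at hy
      simp only [Set.mem_insert_iff, Set.mem_singleton_iff] at hy
      rcases hy with rfl|rfl|rfl|rfl|rfl|rfl|rfl <;>
        first
          | exact absurd rfl hne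
          | (rw [fr _ 0 (by push_cast; linarith) (by push_cast; linarith)]; push_cast; linarith)
          | (rw [fr _ (-1) (by push_cast; linarith) (by push_cast; linarith)]; push_cast; linarith)
  have G1 : gapOf T α = 2*α-1 := by
    apply gapOf_eq
    · refine ⟨3*α-1, ⟨by rw [hT]; simp, by intro h; linarith⟩, ?_⟩
      rw [fr _ 0 (by push_cast; linarith) (by push_cast; linarith)]; push_cast; ring
    · intro y hy hne
      rw [hT] at hy
      simp only [Set.mem_insert_iff, Set.mem_singleton_iff] at hy
      rcases hy with rfl|rfl|rfl|rfl|rfl|rfl|rfl <;>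
        first
          | exact absurd rfl hne
          | (rw [fr _ 0 (by push_cast; linarith) (by push_cast; linarith)]; push_cast; linarith)
          | (rw [fr _ (-1) (by push_cast; linarith) (by push_cast; linarith)]; push_cast; linarith)
  have G2 : gapOf T (2*α-1) = 2*α-1 := by
    apply gapOf_eq
    · refine ⟨4*α-2, ⟨by rw [hT]; simp, by intro h; linarith⟩, ?_⟩
      rw [fr _ 0 (by push_cast; linarith) (by push_cast; linarith)]; push_cast; ring
    · intro y hy hne
      rw [hT] at hy
      simp only [Set.mem_insert_iff, Set.mem_singleton_iff] at hy
      rcases hy with rfl|rfl|rfl|rfl|rfl|rfl|rfl <;>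
        first
          | exact absurd rfl hne
          | (rw [fr _ 0 (by push_cast; linarith) (by push_cast; linarith)]; push_cast; linarith)
          | (rw [fr _ (-1) (by push_cast; linarith) (by push_cast; linarith)]; push_cast; linarith)
  have G3 : gapOf T (3*α-1) = 2*α-1 := by
    apply gapOf_eq
    · refine ⟨5*α-2, ⟨by rw [hT]; simp, by intro h; linarith⟩, ?_⟩
      rw [fr _ 0 (by push_cast; linarith) (by push_cast; linarith)]; push_cast; ring
    · intro y hy hne
      rw [hT] at hy
      simp only [Set.mem_insert_iff, Set.mem_singleton_iff] at hy
      rcases hy with rfl|rfl|rfl|rfl|rfl|rfl|rfl <;>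
        first
          | exact absurd rfl hne
          | (rw [fr _ 0 (by push_cast; linarith) (by push_cast; linarith)]; push_cast; linarith)
          | (rw [fr _ (-1) (by push_cast; linarith) (by push_cast; linarith)]; push_cast; linarith)
  have G4 : gapOf T (4*α-2) = 2*α-1 := by
    apply gapOf_eq
    · refine ⟨6*α-3, ⟨by rw [hT]; simp, by intro h; linarith⟩, ?_⟩
      rw [fr _ 0 (by push_cast; linarith) (by push_cast; linarith)]; push_cast; ring
    · intro y hy hne
      rw [hT] at hy
      simp only [Set.mem_insert_iff, Set.mem_singleton_iff] at hy
      rcases hy with rfl|rfl|rfl|rfl|rfl|rfl|rfl <;>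
        first
          | exact absurd rfl hne
          | (rw [fr _ 0 (by push_cast; linarith) (by push_cast; linarith)]; push_cast; linarith)
          | (rw [fr _ (-1) (by push_cast; linarith) (by push_cast; linarith)]; push_cast; linarith)
  have G5 : gapOf T (5*α-2) = 3-5*α := by
    apply gapOf_eq
    · refine ⟨0, ⟨by rw [hT]; simp, by intro h; linarith⟩, ?_⟩
      rw [fr _ (-1) (by push_cast; linarith) (by push_cast; linarith)]; push_cast; ring
    · intro y hy hne
      rw [hT] at hy
      simp only [Set.mem_insert_iff, Set.mem_singleton_iff] at hy
      rcases hy with rfl|rfl|rfl|rfl|rfl|rfl|rfl <;>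
        first
          | exact absurd rfl hne
          | (rw [fr _ 0 (by push_cast; linarith) (by push_cast; linarith)]; push_cast; linarith)
          | (rw [fr _ (-1) (by push_cast; linarith) (by push_cast; linarith)]; push_cast; linarith)
  have G6 : gapOf T (6*α-3) = 3-5*α := by
    apply gapOf_eq
    · refine ⟨α, ⟨by rw [hT]; simp, by intro h; linarith⟩, ?_⟩
      rw [fr _ 0 (by push_cast; linarith) (by push_cast; linarith)]; push_cast; ring
    · intro y hy hne
      rw [hT] at hy
      simp only [Set.mem_insert_iff, Set.mem_singleton_iff] at hy
      rcases hy with rfl|rfl|rfl|rfl|rfl|rfl|rfl <;>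
        first
          | exact absurd rfl hne
          | (rw [fr _ 0 (by push_cast; linarith) (by push_cast; linarith)]; push_cast; linarith)
          | (rw [fr _ (-1) (by push_cast; linarith) (by push_cast; linarith)]; push_cast; linarith)
  constructor
  · unfold gapSet
    rw [hS]
    ext z
    simp only [Set.mem_image, Set.mem_insert_iff, Set.mem_singleton_iff]
    constructor
    · rintro ⟨x, hx, rfl⟩
      rw [hT] at hx
      simp only [Set.mem_insert_iff, Set.mem_singleton_iff] at hx
      rcases hx with rfl|rfl|rfl|rfl|rfl|rfl|rfl
      · exact Or.inl G0
      · exact Or.inl G1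
      · exact Or.inl G2
      · exact Or.inl G3
      · exact Or.inl G4
      · exact Or.inr G5
      · exact Or.inr G6
    · rintro (rfl|rfl)
      · exact ⟨0, by rw [hT]; simp, G0⟩
      · exact ⟨5*α-2, by rw [hT]; simp, G5⟩
  · intro h; linarith
end

section
/- (Well-formedness of the Pythagorean chromatic scale) For α = log₂(3/2) and the 12 points {kα}, 0 ≤ k ≤ 11, on ℝ/ℤ, the generating interval α, measured as an arc from any point {kα} to {(k+1)α} (for 0 ≤ k ≤ 10), always spans the same number of gaps, namely 7. -/

noncomputable def aP : ℝ := Real.logb 2 (3/2)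

lemma mul_aP (a : ℤ) : (a:ℝ) * aP = Real.logb 2 ((3/2:ℝ)^a) := by
  unfold aP Real.logb
  rw [Real.log_zpow]; ring

lemma int_eq_logb (b : ℤ) : (b:ℝ) = Real.logb 2 ((2:ℝ)^b) := by
  unfold Real.logb
  rw [Real.log_zpow, mul_div_assoc, div_self (by positivity : Real.log 2 ≠ 0), mul_one]

lemma aP_lt_iff (a b : ℤ) : (a:ℝ) * aP < b ↔ (3:ℝ)^a < 2^(a+b) := by
  rw [mul_aP, int_eq_logb b,
    Real.logb_lt_logb_iff (by norm_num) (by positivity) (by positivity),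
    div_zpow, div_lt_iff₀ (by positivity : (0:ℝ) < 2^a), ← zpow_add₀ (by norm_num : (2:ℝ) ≠ 0)]
  rw [add_comm b a]

lemma aP_le_iff (a b : ℤ) : (a:ℝ) * aP ≤ b ↔ (3:ℝ)^a ≤ 2^(a+b) := by
  rw [mul_aP, int_eq_logb b,
    Real.logb_le_logb (by norm_num) (by positivity) (by positivity),
    div_zpow, div_le_iff₀ (by positivity : (0:ℝ) < 2^a), ← zpow_add₀ (by norm_num : (2:ℝ) ≠ 0)]
  rw [add_comm b a]

lemma fract_val (m f : ℤ) (h1 : (2:ℝ)^(m+f) < 3^m) (h2 : (3:ℝ)^m < 2^(m+f+1)) :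
    Int.fract ((m:ℝ)*aP) = (m:ℝ)*aP - f ∧ 0 < Int.fract ((m:ℝ)*aP) := by
  have hlow : (f:ℝ) < (m:ℝ) * aP := by
    by_contra h
    push_neg at h
    exact absurd ((aP_le_iff m f).mp h) (not_le.mpr h1)
  have hhigh : (m:ℝ) * aP < (f:ℝ) + 1 := by
    have := (aP_lt_iff m (f+1)).mpr (by rw [← add_assoc]; exact h2)
    push_cast at this; linarith
  have hfl : ⌊(m:ℝ)*aP⌋ = f := by
    rw [Int.floor_eq_iff]
    refine ⟨by linarith, ?_⟩
    push_cast; linarith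
  rw [Int.fract, hfl]
  exact ⟨rfl, by linarith⟩

lemma P_good (m f : ℤ) (h1 : (2:ℝ)^(m+f) < 3^m) (h2 : (3:ℝ)^m < 2^(m+f+1))
    (h3 : (3:ℝ)^(m-1) ≤ 2^(m-1+f)) :
    0 < Int.fract ((m:ℝ)*aP) ∧ Int.fract ((m:ℝ)*aP) ≤ aP := by
  obtain ⟨he, hp⟩ := fract_val m f h1 h2
  refine ⟨hp, ?_⟩
  have := (aP_le_iff (m-1) f).mpr h3
  push_cast at this
  rw [he]; nlinarith [this]

lemma P_bad (m f : ℤ) (h1 : (2:ℝ)^(m+f) < 3^m) (h2 : (3:ℝ)^m < 2^(m+f+1))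
    (h3 : (2:ℝ)^(m-1+f) < 3^(m-1)) :
    aP < Int.fract ((m:ℝ)*aP) := by
  obtain ⟨he, hp⟩ := fract_val m f h1 h2
  have : (f:ℝ) < ((m:ℝ)-1) * aP := by
    by_contra h
    push_neg at h
    have := (aP_le_iff (m-1) f).mp (by push_cast; linarith)
    exact absurd this (not_le.mpr h3)
  rw [he]; nlinarith [this]

def goodSet : Finset ℤ := {-10,-8,-6,-5,-3,-1,1,2,4,6,7,9,11}

lemma P_iff (m : ℤ) (hl : -10 ≤ m) (hr : m ≤ 11) :
    (0 < Int.fract ((m:ℝ)*aP) ∧ Int.fract ((m:ℝ)*aP) ≤ aP) ↔ m ∈ goodSet := by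
  interval_cases m
  · exact iff_of_true (P_good (-10) (-6) (by norm_num) (by norm_num) (by norm_num)) (by decide)
  · exact iff_of_false (fun h => absurd h.2 (not_le.mpr (P_bad (-9) (-6) (by norm_num) (by norm_num) (by norm_num)))) (by decide)
  · exact iff_of_true (P_good (-8) (-5) (by norm_num) (by norm_num) (by norm_num)) (by decide)
  · exact iff_of_false (fun h => absurd h.2 (not_le.mpr (P_bad (-7) (-5) (by norm_num) (by norm_num) (by norm_num)))) (by decide)
  · exact iff_of_true (P_good (-6) (-4) (by norm_num) (by norm_num) (by norm_num)) (by decide)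
  · exact iff_of_true (P_good (-5) (-3) (by norm_num) (by norm_num) (by norm_num)) (by decide)
  · exact iff_of_false (fun h => absurd h.2 (not_le.mpr (P_bad (-4) (-3) (by norm_num) (by norm_num) (by norm_num)))) (by decide)
  · exact iff_of_true (P_good (-3) (-2) (by norm_num) (by norm_num) (by norm_num)) (by decide)
  · exact iff_of_false (fun h => absurd h.2 (not_le.mpr (P_bad (-2) (-2) (by norm_num) (by norm_num) (by norm_num)))) (by decide)
  · exact iff_of_true (P_good (-1) (-1) (by norm_num) (by norm_num) (by norm_num)) (by decide)
  · exact iff_of_false (by simp) (by decide)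
  · exact iff_of_true (P_good (1) (0) (by norm_num) (by norm_num) (by norm_num)) (by decide)
  · exact iff_of_true (P_good (2) (1) (by norm_num) (by norm_num) (by norm_num)) (by decide)
  · exact iff_of_false (fun h => absurd h.2 (not_le.mpr (P_bad (3) (1) (by norm_num) (by norm_num) (by norm_num)))) (by decide)
  · exact iff_of_true (P_good (4) (2) (by norm_num) (by norm_num) (by norm_num)) (by decide)
  · exact iff_of_false (fun h => absurd h.2 (not_le.mpr (P_bad (5) (2) (by norm_num) (by norm_num) (by norm_num)))) (by decide)
  · exact iff_of_true (P_good (6) (3) (by norm_num) (by norm_num) (by norm_num)) (by decide)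
  · exact iff_of_true (P_good (7) (4) (by norm_num) (by norm_num) (by norm_num)) (by decide)
  · exact iff_of_false (fun h => absurd h.2 (not_le.mpr (P_bad (8) (4) (by norm_num) (by norm_num) (by norm_num)))) (by decide)
  · exact iff_of_true (P_good (9) (5) (by norm_num) (by norm_num) (by norm_num)) (by decide)
  · exact iff_of_false (fun h => absurd h.2 (not_le.mpr (P_bad (10) (5) (by norm_num) (by norm_num) (by norm_num)))) (by decide)
  · exact iff_of_true (P_good (11) (6) (by norm_num) (by norm_num) (by norm_num)) (by decide)

lemma fract_pos (m : ℤ) (hm : m ≠ 0) (h1 : -11 ≤ m) (h2 : m ≤ 11) :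
    0 < Int.fract ((m:ℝ)*aP) := by
  interval_cases m
  · exact (fract_val (-11) (-7) (by norm_num) (by norm_num)).2
  · exact (fract_val (-10) (-6) (by norm_num) (by norm_num)).2
  · exact (fract_val (-9) (-6) (by norm_num) (by norm_num)).2
  · exact (fract_val (-8) (-5) (by norm_num) (by norm_num)).2
  · exact (fract_val (-7) (-5) (by norm_num) (by norm_num)).2
  · exact (fract_val (-6) (-4) (by norm_num) (by norm_num)).2
  · exact (fract_val (-5) (-3) (by norm_num) (by norm_num)).2
  · exact (fract_val (-4) (-3) (by norm_num) (by norm_num)).2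
  · exact (fract_val (-3) (-2) (by norm_num) (by norm_num)).2
  · exact (fract_val (-2) (-2) (by norm_num) (by norm_num)).2
  · exact (fract_val (-1) (-1) (by norm_num) (by norm_num)).2
  · exact absurd rfl hm
  · exact (fract_val (1) (0) (by norm_num) (by norm_num)).2
  · exact (fract_val (2) (1) (by norm_num) (by norm_num)).2
  · exact (fract_val (3) (1) (by norm_num) (by norm_num)).2
  · exact (fract_val (4) (2) (by norm_num) (by norm_num)).2
  · exact (fract_val (5) (2) (by norm_num) (by norm_num)).2
  · exact (fract_val (6) (3) (by norm_num) (by norm_num)).2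
  · exact (fract_val (7) (4) (by norm_num) (by norm_num)).2
  · exact (fract_val (8) (4) (by norm_num) (by norm_num)).2
  · exact (fract_val (9) (5) (by norm_num) (by norm_num)).2
  · exact (fract_val (10) (5) (by norm_num) (by norm_num)).2
  · exact (fract_val (11) (6) (by norm_num) (by norm_num)).2

lemma fract_fract_sub (a b : ℝ) :
    Int.fract (Int.fract a - Int.fract b) = Int.fract (a - b) := by
  have h : Int.fract a - Int.fract b = (a - b) - ((⌊a⌋ - ⌊b⌋ : ℤ):ℝ) := by
    unfold Int.fract; push_cast; ring
  rw [h, Int.fract_sub_intCast]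

lemma fract_aP : Int.fract aP = aP := by
  have := (fract_val 1 0 (by norm_num) (by norm_num)).1
  push_cast at this
  simpa using this

lemma fract_diff (j k : ℕ) :
    Int.fract (Int.fract ((j:ℝ) * aP) - Int.fract ((k:ℝ) * aP))
      = Int.fract (((j:ℝ) - (k:ℝ)) * aP) := by
  rw [fract_fract_sub]; congr 1; push_cast; ring

/-- **Well-formedness of the Pythagorean chromatic scale**: for
`α = log₂(3/2)` and the 12 points `{kα}`, `0 ≤ k ≤ 11`, the arc of length
`α` from `{kα}` to `{(k+1)α}` always spans exactly 7 of the 12 gaps. -/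
theorem chromatic_scale_well_formed :
    ∀ k : ℕ, k ≤ 10 →
      {y ∈ scalePoints (Real.logb 2 (3 / 2)) 12 |
        0 < Int.fract (y - Int.fract (k * Real.logb 2 (3 / 2))) ∧
        Int.fract (y - Int.fract (k * Real.logb 2 (3 / 2))) ≤
          Int.fract (Real.logb 2 (3 / 2))}.ncard = 7 := by
  intro k hk
  rw [show Real.logb 2 (3 / 2) = aP from rfl]
  have hset : {y ∈ scalePoints aP 12 |
        0 < Int.fract (y - Int.fract (k * aP)) ∧
        Int.fract (y - Int.fract (k * aP)) ≤ Int.fract aP}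
      = (fun j : ℕ => Int.fract ((j:ℝ) * aP)) ''
          {j : ℕ | j < 12 ∧ ((j:ℤ) - (k:ℤ)) ∈ goodSet} := by
    ext y
    simp only [Set.mem_setOf_eq, Set.mem_image, scalePoints, fract_aP]
    constructor
    · rintro ⟨⟨j, hj, rfl⟩, hpos, hle⟩
      refine ⟨j, ⟨hj, ?_⟩, rfl⟩
      rw [← P_iff _ (by omega) (by omega)]
      rw [fract_diff j k] at hpos hle
      push_cast
      exact ⟨hpos, hle⟩
    · rintro ⟨j, ⟨hj, hg⟩, rfl⟩
      have hP := (P_iff _ (by omega) (by omega)).mpr hg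
      push_cast at hP
      rw [← fract_diff j k] at hP
      exact ⟨⟨j, hj, rfl⟩, hP.1, hP.2⟩
  have hinj : Set.InjOn (fun j : ℕ => Int.fract ((j:ℝ) * aP))
      {j : ℕ | j < 12 ∧ ((j:ℤ) - (k:ℤ)) ∈ goodSet} := by
    intro a ha b hb hab
    by_contra hne
    have ha1 : a < 12 := ha.1
    have hb1 : b < 12 := hb.1
    have hd : ((a:ℤ) - (b:ℤ)) ≠ 0 := by omega
    have hz : Int.fract (((a:ℝ) - (b:ℝ)) * aP) = 0 := by
      rw [← fract_diff a b]
      simp only at hab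
      rw [hab, sub_self, Int.fract_zero]
    have := fract_pos ((a:ℤ) - (b:ℤ)) hd (by omega) (by omega)
    push_cast at this
    linarith
  rw [hset, Set.ncard_image_of_injOn hinj]
  have hfin : {j : ℕ | j < 12 ∧ ((j:ℤ) - (k:ℤ)) ∈ goodSet}
      = ↑((Finset.range 12).filter (fun j : ℕ => ((j:ℤ) - (k:ℤ)) ∈ goodSet)) := by
    ext j
    simp [Finset.mem_filter, Finset.mem_range]
  rw [hfin, Set.ncard_coe_finset]
  interval_cases k <;> decide
end
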